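/- Let A ∈ ℂ^{n×p}, x₀ ∈ ℂ^p, b_noise ∈ ℝⁿ, and set b = |Ax₀| + b_noise. If V minimizes d₁(V, F) over {V ∈ H_n : V ⪰ 0, diag(V) = b²}, then Tr(V(I − AA†)) ≤ ‖b_noise‖₂². -/

import Mathlib

open Matrix ComplexOrder

/-- The trace (nuclear) norm: sum of singular values. -/
noncomputable def traceNorm {n : ℕ} (M : Matrix (Fin n) (Fin n) ℂ) : ℝ :=
  ∑ i, Real.sqrt ((Matrix.posSemidef_conjTranspose_mul_self M).1.eigenvalues i)

/-- The Euclidean norm of a real vector. -/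
noncomputable def rvecNorm {n : ℕ} (v : Fin n → ℝ) : ℝ :=
  Real.sqrt (∑ i, (v i) ^ 2)

/-- `F = {V ∈ H_n : (I − AA†)V(I − AA†) = 0}`. -/
def Fset {n p : ℕ} (A : Matrix (Fin n) (Fin p) ℂ) (Ad : Matrix (Fin p) (Fin n) ℂ) :
    Set (Matrix (Fin n) (Fin n) ℂ) :=
  {V | V.IsHermitian ∧ (1 - A * Ad) * V * (1 - A * Ad) = 0}

/-- Trace-norm distance from `V` to `F`. -/
noncomputable def d1F {n p : ℕ} (A : Matrix (Fin n) (Fin p) ℂ)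
    (Ad : Matrix (Fin p) (Fin n) ℂ) (V : Matrix (Fin n) (Fin n) ℂ) : ℝ :=
  sInf {r : ℝ | ∃ W ∈ Fset A Ad, r = traceNorm (V - W)}

/-! Write `Q = 1 - A A†`, the orthogonal projection onto `(range A)ᗮ`. For `W ∈ F` we have
`tr (W Q) = tr (Q W Q) = 0`, so `tr (V Q) = tr (Q (V - W)) ≤ ‖Q‖ ‖V - W‖₁ ≤ ‖V - W‖₁`, whence
`tr (V Q) ≤ d₁(V, F)` for every `V`. On the other hand, let `z` have moduli `b` and the phases of `A x₀`.
Then `z z†` is feasible, and since `V - Q V Q ∈ F`,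
`d₁(z z†, F) ≤ ‖Q z z† Q‖₁ = ‖Q z‖²`. As `z = A x₀ + δ` with `|δ| = |bnoise|` and `Q A = 0`,
`‖Q z‖ = ‖Q δ‖ ≤ ‖bnoise‖`, and minimality of `V` chains the two bounds. -/

open scoped InnerProductSpace

namespace Matrix

variable {ι : Type*} [Fintype ι]

lemma IsHermitian.mul_vecMulVec_star_mul {R : Type*} [CommRing R] [StarRing R]
    {Q : Matrix ι ι R} (hQ : Q.IsHermitian) (u : ι → R) :
    Q * vecMulVec u (star u) * Q = vecMulVec (Q *ᵥ u) (star (Q *ᵥ u)) := by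
  rw [mul_vecMulVec, vecMulVec_mul, star_mulVec, hQ.eq]

lemma isStarProjection_mul_of_mul_mul_self {m R : Type*} [Fintype m] [Semiring R] [StarRing R]
    {A : Matrix ι m R} {B : Matrix m ι R} (hABA : A * B * A = A) (hAB : (A * B)ᴴ = A * B) :
    IsStarProjection (A * B) where
  isIdempotentElem := by rw [IsIdempotentElem, ← Matrix.mul_assoc, hABA]
  isSelfAdjoint := hAB

variable [DecidableEq ι] {𝕜 : Type*} [RCLike 𝕜]

lemma IsHermitian.trace_cfc {A : Matrix ι ι 𝕜} (hA : A.IsHermitian) (f : ℝ → ℝ) :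
    (cfc f A).trace = ∑ i, (f (hA.eigenvalues i) : 𝕜) := by
  rw [hA.cfc_eq, IsHermitian.cfc, Unitary.conjStarAlgAut_apply, trace_mul_cycle,
    Unitary.coe_star_mul_self, one_mul, trace_diagonal]
  rfl

open scoped MatrixOrder in
lemma PosSemidef.cfc_sqrt_conjTranspose_mul_self {A : Matrix ι ι 𝕜} (hA : A.PosSemidef) :
    cfc Real.sqrt (Aᴴ * A) = A := by
  have hA₀ : 0 ≤ A := hA.nonneg
  rw [← star_eq_conjTranspose, hA₀.isSelfAdjoint.star_eq, ← cfcₙ_eq_cfc,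
    ← CFC.sqrt_eq_real_sqrt _ hA₀.isSelfAdjoint.mul_self_nonneg, CFC.sqrt_mul_self A]

lemma IsHermitian.toEuclideanCLM_eigenvectorBasis {B : Matrix ι ι 𝕜} (hB : B.IsHermitian)
    (j : ι) :
    toEuclideanCLM (𝕜 := 𝕜) B (hB.eigenvectorBasis j) =
      (hB.eigenvalues j : 𝕜) • hB.eigenvectorBasis j := by
  ext1
  rw [ofLp_toEuclideanCLM, hB.mulVec_eigenvectorBasis, WithLp.ofLp_smul,
    RCLike.real_smul_eq_coe_smul (K := 𝕜)]

lemma norm_toEuclideanCLM_le_one_of_isStarProjection {Q : Matrix ι ι 𝕜}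
    (hQ : IsStarProjection Q) : ‖toEuclideanCLM (𝕜 := 𝕜) Q‖ ≤ 1 :=
  (hQ.map toEuclideanCLM).norm_le

end Matrix

lemma traceNorm_nonneg {n : ℕ} (M : Matrix (Fin n) (Fin n) ℂ) : 0 ≤ traceNorm M :=
  Finset.sum_nonneg fun _ _ => Real.sqrt_nonneg _

lemma traceNorm_eq_re_trace {n : ℕ} {S : Matrix (Fin n) (Fin n) ℂ} (hS : S.PosSemidef) :
    traceNorm S = (trace S).re := by
  conv_rhs => rw [← hS.cfc_sqrt_conjTranspose_mul_self,
    (posSemidef_conjTranspose_mul_self S).1.trace_cfc]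
  rw [traceNorm, Complex.re_sum]
  simp

lemma traceNorm_vecMulVec_self_star {n : ℕ} (u : Fin n → ℂ) :
    traceNorm (vecMulVec u (star u)) = ‖WithLp.toLp 2 u‖ ^ 2 := by
  rw [traceNorm_eq_re_trace (posSemidef_vecMulVec_self_star u), EuclideanSpace.norm_sq_eq,
    trace, Complex.re_sum]
  refine Finset.sum_congr rfl fun i _ => ?_
  simp only [diag_apply, vecMulVec_apply, Pi.star_apply, Complex.star_def, Complex.mul_conj,
    Complex.normSq_eq_norm_sq, Complex.ofReal_re]

lemma norm_toEuclideanCLM_eigenvectorBasis {n : ℕ} (M : Matrix (Fin n) (Fin n) ℂ) (j : Fin n) :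
    ‖toEuclideanCLM (𝕜 := ℂ) M ((posSemidef_conjTranspose_mul_self M).1.eigenvectorBasis j)‖ =
      √((posSemidef_conjTranspose_mul_self M).1.eigenvalues j) := by
  set hB := (posSemidef_conjTranspose_mul_self M).1
  have hw : ‖hB.eigenvectorBasis j‖ = 1 := hB.eigenvectorBasis.orthonormal.1 j
  rw [← Real.sqrt_sq (norm_nonneg _), ← inner_self_eq_norm_sq (𝕜 := ℂ),
    ← ContinuousLinearMap.adjoint_inner_right, ← ContinuousLinearMap.star_eq_adjoint,
    ← map_star, ← mul_apply_eq_comp, ← map_mul, star_eq_conjTranspose,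
    hB.toEuclideanCLM_eigenvectorBasis, inner_smul_right, inner_self_eq_norm_sq_to_K, hw]
  simp

/-- Hölder's inequality between the operator norm and the trace norm. -/
lemma norm_trace_mul_le {n : ℕ} (Q M : Matrix (Fin n) (Fin n) ℂ) :
    ‖trace (Q * M)‖ ≤ ‖toEuclideanCLM (𝕜 := ℂ) Q‖ * traceNorm M := by
  set w := (posSemidef_conjTranspose_mul_self M).1.eigenvectorBasis
  have htrace : trace (Q * M) =
      ∑ j, ⟪w j, toEuclideanCLM (𝕜 := ℂ) Q (toEuclideanCLM (𝕜 := ℂ) M (w j))⟫_ℂ := by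
    rw [← trace_toLin_eq (Q * M) (EuclideanSpace.basisFun (Fin n) ℂ).toBasis,
      ← toEuclideanLin_eq_toLin_orthonormal, ← coe_toEuclideanCLM_eq_toEuclideanLin, map_mul,
      LinearMap.trace_eq_sum_inner _ w]
    rfl
  rw [htrace, traceNorm, Finset.mul_sum]
  refine (norm_sum_le _ _).trans (Finset.sum_le_sum fun j _ => ?_)
  calc _ ≤ ‖w j‖ * ‖toEuclideanCLM (𝕜 := ℂ) Q (toEuclideanCLM (𝕜 := ℂ) M (w j))‖ :=
        norm_inner_le_norm _ _
    _ ≤ 1 * (‖toEuclideanCLM (𝕜 := ℂ) Q‖ * ‖toEuclideanCLM (𝕜 := ℂ) M (w j)‖) := by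
        rw [w.orthonormal.1 j]
        exact mul_le_mul_of_nonneg_left (ContinuousLinearMap.le_opNorm _ _) zero_le_one
    _ = _ := by rw [one_mul, norm_toEuclideanCLM_eigenvectorBasis]

section DistanceToF

variable {n p : ℕ} {A : Matrix (Fin n) (Fin p) ℂ} {Ad : Matrix (Fin p) (Fin n) ℂ}

lemma trace_mul_eq_zero_of_mem_Fset (hP : IsIdempotentElem (A * Ad))
    {W : Matrix (Fin n) (Fin n) ℂ} (hW : W ∈ Fset A Ad) : trace (W * (1 - A * Ad)) = 0 := by
  rw [← hP.one_sub.eq, ← Matrix.mul_assoc, trace_mul_comm, ← Matrix.mul_assoc, hW.2, trace_zero]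

lemma re_trace_mul_le_d1F (hP : IsStarProjection (A * Ad)) (V : Matrix (Fin n) (Fin n) ℂ) :
    (trace (V * (1 - A * Ad))).re ≤ d1F A Ad V := by
  refine le_csInf ⟨_, 0, ⟨isHermitian_zero, by simp⟩, rfl⟩ ?_
  rintro _ ⟨W, hW, rfl⟩
  have hshift : trace (V * (1 - A * Ad)) = trace ((1 - A * Ad) * (V - W)) := by
    rw [Matrix.mul_sub (1 - A * Ad) V W, trace_sub, trace_mul_comm (1 - A * Ad) W,
      trace_mul_eq_zero_of_mem_Fset hP.isIdempotentElem hW, sub_zero, trace_mul_comm]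
  calc (trace (V * (1 - A * Ad))).re ≤ ‖trace ((1 - A * Ad) * (V - W))‖ :=
        hshift ▸ Complex.re_le_norm _
    _ ≤ ‖toEuclideanCLM (n := Fin n) (𝕜 := ℂ) (1 - A * Ad)‖ * traceNorm (V - W) :=
        norm_trace_mul_le _ _
    _ ≤ 1 * traceNorm (V - W) := by
        gcongr
        · exact traceNorm_nonneg _
        · exact norm_toEuclideanCLM_le_one_of_isStarProjection hP.one_sub
    _ = traceNorm (V - W) := one_mul _

lemma d1F_le_traceNorm (hP : IsStarProjection (A * Ad)) {V : Matrix (Fin n) (Fin n) ℂ}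
    (hV : V.IsHermitian) : d1F A Ad V ≤ traceNorm ((1 - A * Ad) * V * (1 - A * Ad)) := by
  set Q := 1 - A * Ad
  have hQH : Qᴴ = Q := hP.one_sub.isSelfAdjoint
  have hQQ : Q * Q = Q := hP.one_sub.isIdempotentElem.eq
  refine csInf_le ⟨0, ?_⟩ ⟨V - Q * V * Q, ⟨?_, ?_⟩, by rw [sub_sub_cancel]⟩
  · rintro _ ⟨W, -, rfl⟩
    exact traceNorm_nonneg _
  · rw [IsHermitian, conjTranspose_sub, conjTranspose_mul, conjTranspose_mul, hQH, hV.eq,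
      Matrix.mul_assoc]
  · rw [show Q * (V - Q * V * Q) * Q = Q * V * Q - (Q * Q) * V * (Q * Q) by noncomm_ring, hQQ,
      sub_self]

end DistanceToF

section PhaseAlign

variable {ι : Type*}

noncomputable def phaseAlign (y : ι → ℂ) (r : ι → ℝ) : ι → ℂ :=
  fun i => r i * Complex.exp (Complex.arg (y i) * Complex.I)

lemma phaseAlign_norm_add (y : ι → ℂ) (e : ι → ℝ) :
    phaseAlign y (fun i => ‖y i‖ + e i) = y + phaseAlign y e := by
  funext i
  simp only [phaseAlign, Pi.add_apply, Complex.ofReal_add, add_mul, Complex.norm_mul_exp_arg_mul_I]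

lemma norm_phaseAlign (y : ι → ℂ) (r : ι → ℝ) (i : ι) : ‖phaseAlign y r i‖ = |r i| := by
  rw [phaseAlign, norm_mul, Complex.norm_exp_ofReal_mul_I, mul_one, Complex.norm_real,
    Real.norm_eq_abs]

lemma phaseAlign_mul_star (y : ι → ℂ) (r : ι → ℝ) (i : ι) :
    phaseAlign y r i * star (phaseAlign y r i) = (r i : ℂ) ^ 2 := by
  rw [Complex.star_def, Complex.mul_conj, Complex.normSq_eq_norm_sq, norm_phaseAlign, sq_abs,
    Complex.ofReal_pow]

lemma norm_toLp_phaseAlign_sq [Fintype ι] (y : ι → ℂ) (r : ι → ℝ) :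
    ‖WithLp.toLp 2 (phaseAlign y r)‖ ^ 2 = ∑ i, r i ^ 2 := by
  simp only [EuclideanSpace.norm_sq_eq, norm_phaseAlign, sq_abs]

end PhaseAlign

theorem trace_V_perp_le_general {n p : ℕ}
    (A : Matrix (Fin n) (Fin p) ℂ) (Ad : Matrix (Fin p) (Fin n) ℂ)
    (hPenrose : A * Ad * A = A ∧ Ad * A * Ad = Ad ∧
      (A * Ad)ᴴ = A * Ad ∧ (Ad * A)ᴴ = Ad * A)
    (x₀ : Fin p → ℂ) (bnoise : Fin n → ℝ)
    (b : Fin n → ℝ) (hb : b = fun i => ‖A.mulVec x₀ i‖ + bnoise i)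
    (V : Matrix (Fin n) (Fin n) ℂ)
    (hVmin : ∀ V' : Matrix (Fin n) (Fin n) ℂ, V'.PosSemidef →
      (∀ i, V' i i = ((b i : ℂ)) ^ 2) → d1F A Ad V ≤ d1F A Ad V') :
    (Matrix.trace (V * (1 - A * Ad))).re ≤ (rvecNorm bnoise) ^ 2 := by
  subst hb
  have hP := isStarProjection_mul_of_mul_mul_self hPenrose.1 hPenrose.2.2.1
  set Q := 1 - A * Ad
  have hQ : Q.IsHermitian := hP.one_sub.isSelfAdjoint
  set z := phaseAlign (A *ᵥ x₀) (fun i => ‖(A *ᵥ x₀) i‖ + bnoise i)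
  set δ := phaseAlign (A *ᵥ x₀) bnoise
  have hQz : Q *ᵥ z = Q *ᵥ δ := by
    rw [show z = A *ᵥ x₀ + δ from phaseAlign_norm_add _ _, mulVec_add, mulVec_mulVec,
      Matrix.sub_mul, Matrix.one_mul, hPenrose.1, sub_self, zero_mulVec, zero_add]
  have hzz : (vecMulVec z (star z)).PosSemidef := posSemidef_vecMulVec_self_star z
  calc (trace (V * Q)).re ≤ d1F A Ad V := re_trace_mul_le_d1F hP V
    _ ≤ d1F A Ad (vecMulVec z (star z)) :=
        hVmin _ hzz fun i => by rw [vecMulVec_apply, Pi.star_apply, phaseAlign_mul_star]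
    _ ≤ traceNorm (Q * vecMulVec z (star z) * Q) := d1F_le_traceNorm hP hzz.1
    _ = ‖toEuclideanCLM (n := Fin n) (𝕜 := ℂ) Q (WithLp.toLp 2 δ)‖ ^ 2 := by
        rw [hQ.mul_vecMulVec_star_mul, traceNorm_vecMulVec_self_star, hQz]
        rfl
    _ ≤ ‖WithLp.toLp 2 δ‖ ^ 2 := by
        gcongr
        exact ContinuousLinearMap.le_of_opNorm_le _
          (norm_toEuclideanCLM_le_one_of_isStarProjection hP.one_sub) _ |>.trans_eq (one_mul _)
    _ = rvecNorm bnoise ^ 2 := by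
        rw [norm_toLp_phaseAlign_sq, rvecNorm, Real.sq_sqrt (by positivity)]

/-- Let `b = |Ax₀| + b_noise`. If `V` minimizes `d₁(·, F)` over
`{V ⪰ 0 : diag(V) = b²}`, then `Tr(V(I − AA†)) ≤ ‖b_noise‖₂²`. -/
theorem trace_V_perp_le {n p : ℕ}
    (A : Matrix (Fin n) (Fin p) ℂ) (Ad : Matrix (Fin p) (Fin n) ℂ)
    (hPenrose : A * Ad * A = A ∧ Ad * A * Ad = Ad ∧
      (A * Ad)ᴴ = A * Ad ∧ (Ad * A)ᴴ = Ad * A)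
    (x₀ : Fin p → ℂ) (bnoise : Fin n → ℝ)
    (b : Fin n → ℝ) (hb : b = fun i => ‖A.mulVec x₀ i‖ + bnoise i)
    (V : Matrix (Fin n) (Fin n) ℂ)
    (hVpsd : V.PosSemidef) (hVdiag : ∀ i, V i i = ((b i : ℂ)) ^ 2)
    (hVmin : ∀ V' : Matrix (Fin n) (Fin n) ℂ, V'.PosSemidef →
      (∀ i, V' i i = ((b i : ℂ)) ^ 2) → d1F A Ad V ≤ d1F A Ad V') :
    (Matrix.trace (V * (1 - A * Ad))).re ≤ (rvecNorm bnoise) ^ 2 :=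
  trace_V_perp_le_general A Ad hPenrose x₀ bnoise b hb V hVmin
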